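/- A linear map φ on g = se(2) × R is a Lie algebra automorphism if and only if in block form φ = [[ε,0,0],[η,P,0],[a,0,t]] with ε = ±1, η ∈ R^2, a ∈ R, t ∈ R\{0}, and P ∈ GL(2,R) with PJ = εJP. -/

import Mathlib

/-!
The derived algebra of `g` is `{0} × ℝ² × {0}` and its centre is `{0} × {0} × ℝ`; an
automorphism preserves both, which forces the zeros of the block form. On the derived algebra
`ad (1,0,0)` acts as `J`, so applying `φ` to `[(1,0,0), (0,v,0)] = (0,Jv,0)` gives `PJ = εJP`,
and taking determinants (`det J = 1`, `det P ≠ 0`) gives `ε² = 1`. Conversely, every map of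
this block form with `PJ = εJP` preserves the bracket by direct computation.
-/

/-- J = [[0,-1],[1,0]] -/
def J : Matrix (Fin 2) (Fin 2) ℝ := !![0, -1; 1, 0]

/-- g = se(2) × ℝ, elements written (s, v, c) ∈ ℝ × ℝ² × ℝ. -/
abbrev gLie := ℝ × (Fin 2 → ℝ) × ℝ

/-- Bracket on g = se(2) × ℝ: [(X,a),(Y,b)] = ([X,Y], 0). -/
def gBr (x y : gLie) : gLie :=
  (0, x.1 • J.mulVec y.2.1 - y.1 • J.mulVec x.2.1, 0)

open Matrix hiding J

lemma J_mul_J : J * J = -1 := by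
  ext i j
  fin_cases i <;> fin_cases j <;> simp [J]

lemma J_mulVec_J_mulVec (v : Fin 2 → ℝ) : J *ᵥ J *ᵥ v = -v := by
  rw [mulVec_mulVec, J_mul_J, neg_mulVec, one_mulVec]

lemma det_J : J.det = 1 := by
  simp [J, det_fin_two_of]

lemma eq_one_or_neg_one_of_mul_J_eq {P : Matrix (Fin 2) (Fin 2) ℝ} {ε : ℝ} (hP : IsUnit P)
    (hPJ : P * J = ε • (J * P)) : ε = 1 ∨ ε = -1 := by
  have hdet : P.det = ε ^ 2 * P.det := by
    simpa [det_mul, det_smul, det_J] using congrArg det hPJ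
  have hP0 : P.det ≠ 0 := ((isUnit_iff_isUnit_det P).mp hP).ne_zero
  have hε : ε ^ 2 = 1 := by
    simpa using mul_right_cancel₀ hP0 (hdet.symm.trans (one_mul _).symm)
  exact sq_eq_one_iff.mp hε

lemma gBr_unit_left (v : Fin 2 → ℝ) : gBr (1, 0, 0) (0, v, 0) = (0, J *ᵥ v, 0) := by
  simp [gBr]

lemma eq_gBr_unit_left (v : Fin 2 → ℝ) :
    ((0, v, 0) : gLie) = gBr (1, 0, 0) (0, -(J *ᵥ v), 0) := by
  rw [gBr_unit_left, mulVec_neg, J_mulVec_J_mulVec, neg_neg]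

lemma eq_of_forall_gBr_eq_zero {z : gLie} (hz : ∀ y, gBr z y = 0) : z = (0, 0, z.2.2) := by
  have h1 := congrArg (fun w : gLie => w.2.1 0) (hz (0, ![0, 1], 0))
  have h2 := congrArg (fun w : gLie => J *ᵥ w.2.1) (hz (1, 0, 0))
  simp only [gBr, zero_smul, one_smul, smul_zero, zero_sub, mulVec_neg, J_mulVec_J_mulVec,
    neg_neg, Prod.snd_zero, Prod.fst_zero, mulVec_zero] at h1 h2
  refine Prod.ext ?_ (Prod.ext h2 rfl)
  simpa [J] using h1

lemma mk_eq_smul_add_add_smul (s : ℝ) (v : Fin 2 → ℝ) (c : ℝ) :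
    ((s, v, c) : gLie) = s • (1, 0, 0) + (0, v, 0) + c • (0, 0, 1) := by
  simp

/-- The block matrix `[[ε,0,0],[η,P,0],[a,0,t]]` acting on `(s, v, c)`. -/
def blockMap (ε : ℝ) (η : Fin 2 → ℝ) (P : Matrix (Fin 2) (Fin 2) ℝ) (a t : ℝ) (x : gLie) :
    gLie :=
  (ε * x.1, x.1 • η + P *ᵥ x.2.1, a * x.1 + t * x.2.2)

lemma blockMap_gBr {ε : ℝ} (η : Fin 2 → ℝ) {P : Matrix (Fin 2) (Fin 2) ℝ} (a t : ℝ)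
    (hPJ : P * J = ε • (J * P)) (x y : gLie) :
    blockMap ε η P a t (gBr x y) = gBr (blockMap ε η P a t x) (blockMap ε η P a t y) := by
  have hcomm (u : Fin 2 → ℝ) : P *ᵥ J *ᵥ u = ε • J *ᵥ P *ᵥ u := by
    rw [mulVec_mulVec, hPJ, smul_mulVec, ← mulVec_mulVec]
  simp only [blockMap, gBr, mul_zero, add_zero, zero_smul, zero_add, mulVec_sub, mulVec_smul,
    mulVec_add, hcomm]
  congr 2
  module

def PreservesBracket (φ : gLie → gLie) : Prop :=
  ∀ x y, φ (gBr x y) = gBr (φ x) (φ y)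

def vecBlock (φ : gLie →ₗ[ℝ] gLie) : Matrix (Fin 2) (Fin 2) ℝ :=
  LinearMap.toMatrix'
    (LinearMap.fst ℝ _ ℝ ∘ₗ LinearMap.snd ℝ ℝ _ ∘ₗ φ ∘ₗ LinearMap.inr ℝ ℝ _ ∘ₗ LinearMap.inl ℝ _ ℝ)

lemma vecBlock_mulVec (φ : gLie →ₗ[ℝ] gLie) (v : Fin 2 → ℝ) :
    vecBlock φ *ᵥ v = (φ (0, v, 0)).2.1 := by
  rw [vecBlock, ← toLin'_apply, toLin'_toMatrix']
  rfl

section PreservesBracket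

variable {φ : gLie →ₗ[ℝ] gLie}

lemma PreservesBracket.apply_vec (h : PreservesBracket φ) (v : Fin 2 → ℝ) :
    φ (0, v, 0) = (0, vecBlock φ *ᵥ v, 0) := by
  rw [vecBlock_mulVec, eq_gBr_unit_left v, h]
  rfl

lemma PreservesBracket.apply_center (h : PreservesBracket φ) (hφ : Function.Surjective φ) :
    φ (0, 0, 1) = (0, 0, (φ (0, 0, 1)).2.2) := by
  refine eq_of_forall_gBr_eq_zero fun y => ?_
  obtain ⟨x, rfl⟩ := hφ y
  have hx : gBr (0, 0, 1) x = 0 := by simp [gBr]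
  rw [← h, hx, map_zero]

lemma PreservesBracket.vecBlock_mul_J (h : PreservesBracket φ) :
    vecBlock φ * J = (φ (1, 0, 0)).1 • (J * vecBlock φ) := by
  refine toLin'.injective (LinearMap.ext fun v => ?_)
  have hv := h (1, 0, 0) (0, v, 0)
  rw [gBr_unit_left, h.apply_vec, h.apply_vec] at hv
  simpa [← mulVec_mulVec, gBr] using congrArg (fun w : gLie => w.2.1) hv

lemma PreservesBracket.isUnit_vecBlock (h : PreservesBracket φ) (hφ : Function.Injective φ) :
    IsUnit (vecBlock φ) := by
  rw [isUnit_iff_isUnit_det, isUnit_iff_ne_zero]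
  intro h0
  obtain ⟨v, hv, hv0⟩ := exists_mulVec_eq_zero_iff.mpr h0
  apply hv
  have : φ (0, v, 0) = φ 0 := by rw [h.apply_vec, hv0, map_zero]; rfl
  exact congrArg (fun w : gLie => w.2.1) (hφ this)

lemma PreservesBracket.apply_center_ne_zero (h : PreservesBracket φ)
    (hφ : Function.Bijective φ) : (φ (0, 0, 1)).2.2 ≠ 0 := by
  intro h0
  have h1 := h.apply_center hφ.2
  rw [h0] at h1
  simpa using hφ.1 (h1.trans (map_zero φ).symm)

lemma PreservesBracket.apply_eq_blockMap (h : PreservesBracket φ) (hφ : Function.Surjective φ)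
    (x : gLie) :
    φ x = blockMap (φ (1, 0, 0)).1 (φ (1, 0, 0)).2.1 (vecBlock φ) (φ (1, 0, 0)).2.2
      (φ (0, 0, 1)).2.2 x := by
  obtain ⟨s, v, c⟩ := x
  rw [mk_eq_smul_add_add_smul s v c, map_add, map_add, map_smul, map_smul, h.apply_vec,
    h.apply_center hφ]
  simp [blockMap, Prod.ext_iff, mul_comm]

end PreservesBracket

/-- A linear bijection φ of g = se(2) × ℝ is a Lie algebra automorphism iff,
in 1+2+1 block form, φ = [[ε,0,0],[η,P,0],[a,0,t]] with ε = ±1, η ∈ ℝ²,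
a ∈ ℝ, t ≠ 0 and P ∈ GL(2,ℝ) with PJ = εJP. -/
theorem stmt9 (φ : gLie ≃ₗ[ℝ] gLie) :
    (∀ x y, φ (gBr x y) = gBr (φ x) (φ y)) ↔
    ∃ (ε : ℝ) (η : Fin 2 → ℝ) (P : Matrix (Fin 2) (Fin 2) ℝ) (a t : ℝ),
      (ε = 1 ∨ ε = -1) ∧ IsUnit P ∧ t ≠ 0 ∧ P * J = ε • (J * P) ∧
      ∀ (s : ℝ) (v : Fin 2 → ℝ) (c : ℝ),
        φ (s, v, c) = (ε * s, s • η + P.mulVec v, a * s + t * c) := by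
  constructor
  · intro h
    have h' : PreservesBracket (φ : gLie →ₗ[ℝ] gLie) := h
    have hP := h'.isUnit_vecBlock φ.injective
    have hPJ := h'.vecBlock_mul_J
    exact ⟨_, _, _, _, _, eq_one_or_neg_one_of_mul_J_eq hP hPJ, hP,
      h'.apply_center_ne_zero φ.bijective, hPJ,
      fun s v c => h'.apply_eq_blockMap φ.surjective (s, v, c)⟩
  · rintro ⟨ε, η, P, a, t, -, -, -, hPJ, hφ⟩ x y
    have hφ' (z : gLie) : φ z = blockMap ε η P a t z := hφ z.1 z.2.1 z.2.2
    rw [hφ', hφ', hφ']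
    exact blockMap_gBr η a t hPJ x y
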